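/- Fix η > 0, α ∈ (0,1), and π ∈ (0,1), and define b(V; δ) = √( ((V·η² + 1)/η²) · log((V·η² + 1)/δ²) ). Define the relative width R_π(V₀, V₁) = ( b(V₀; α/2) + b(V₁; α/2) ) / b( V₁/(1−π) + V₀/π ; α ). Suppose (V₀(n)) and (V₁(n)) are sequences of positive reals with V₁(n) → ∞ and V₀(n)/V₁(n) → 0. Then R_π(V₀(n), V₁(n)) → √(1−π) as n → ∞; in particular the union-bound width is asymptotically strictly smaller than the variance-upper-bound width. -/

import Mathlib

/-!
Write `c = η²`. Since `b(V; δ)² = ((Vc + 1)/c) · log((Vc + 1)/δ²)`, the ratio `b(U; δ)/b(W; δ')`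
is the square root of `(Uc + 1)/(Wc + 1)` times a ratio of logarithms. When `W → ∞` and
`U/W → r > 0`, the first factor tends to `r` and the logarithms differ by a bounded amount, so
their ratio tends to `1`. When `U/W → 0`, bounding `log(Uc + 1) ≤ log(Wc + 1)` still sends the
product to `0`. With `W = V₁/(1-π) + V₀/π` one has `V₁/W → 1 - π` and `V₀/W → 0`, so the relative
width tends to `0 + √(1 - π) < 1`.
-/

open Filter Topology Real

noncomputable def mixtureBoundary (η V δ : ℝ) : ℝ :=
  √((V * η ^ 2 + 1) / η ^ 2 * log ((V * η ^ 2 + 1) / δ ^ 2))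

section Limits

variable {ι : Type*} {l : Filter ι}

lemma tendsto_log_div_log_of_tendsto_div {x y : ι → ℝ} {L : ℝ} (hy : Tendsto y l atTop)
    (hxy : Tendsto (fun n => x n / y n) l (𝓝 L)) (hL : L ≠ 0) :
    Tendsto (fun n => log (x n) / log (y n)) l (𝓝 1) := by
  have hlogy : Tendsto (fun n => log (y n)) l atTop := tendsto_log_atTop.comp hy
  have hsmall : Tendsto (fun n => log (x n / y n) / log (y n)) l (𝓝 0) :=
    (hxy.log hL).div_atTop hlogy
  have hlim := hsmall.add_const 1
  rw [zero_add] at hlim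
  refine hlim.congr' ?_
  filter_upwards [hxy.eventually_ne hL, hy.eventually_gt_atTop 0,
    hlogy.eventually_gt_atTop 0] with n hxy0 hy0 hlogy0
  have hx0 : x n ≠ 0 := left_ne_zero_of_mul (by simpa [div_eq_mul_inv] using hxy0)
  rw [log_div hx0 hy0.ne', sub_div, div_self hlogy0.ne', sub_add_cancel]

lemma tendsto_add_div_add_of_tendsto_div {U W : ι → ℝ} {r : ℝ} (hW : Tendsto W l atTop)
    (hUW : Tendsto (fun n => U n / W n) l (𝓝 r)) (a : ℝ) :
    Tendsto (fun n => (U n + a) / (W n + a)) l (𝓝 r) := by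
  have ha : Tendsto (fun n => a / W n) l (𝓝 0) := tendsto_const_nhds.div_atTop hW
  have hlim := (hUW.add ha).div (tendsto_const_nhds.add ha) (by norm_num : (1 : ℝ) + 0 ≠ 0)
  rw [add_zero, add_zero, div_one] at hlim
  refine hlim.congr' ?_
  filter_upwards [hW.eventually_gt_atTop 0] with n hW0
  rw [Pi.div_apply, ← add_div, ← div_self hW0.ne', ← add_div, div_div_div_cancel_right₀ hW0.ne']

lemma tendsto_div_add_div_of_tendsto_div {V₀ V₁ : ι → ℝ} {s t : ℝ}
    (hV₁ : ∀ᶠ n in l, V₁ n ≠ 0) (hs : s ≠ 0) (h : Tendsto (fun n => V₀ n / V₁ n) l (𝓝 0)) :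
    Tendsto (fun n => V₁ n / (V₁ n / s + V₀ n / t)) l (𝓝 s) ∧
      Tendsto (fun n => V₀ n / (V₁ n / s + V₀ n / t)) l (𝓝 0) := by
  have h₁ : Tendsto (fun n => V₁ n / (V₁ n / s + V₀ n / t)) l (𝓝 s) := by
    have hlim := ((h.div_const t).const_add s⁻¹).inv₀ (by simpa using hs)
    rw [zero_div, add_zero, inv_inv] at hlim
    refine hlim.congr' ?_
    filter_upwards [hV₁] with n hn
    have : V₁ n / s + V₀ n / t = V₁ n * (s⁻¹ + V₀ n / V₁ n / t) := by field_simp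
    rw [this, div_mul_cancel_left₀ hn]
  have h₀ := h.mul h₁
  rw [zero_mul] at h₀
  refine ⟨h₁, h₀.congr' ?_⟩
  filter_upwards [hV₁] with n hn
  exact div_mul_div_cancel₀ hn

end Limits

section MixtureBoundary

variable {η δ δ' : ℝ}

lemma log_mixture_pos {V : ℝ} (hV : 0 ≤ V) (hδ : δ ∈ Set.Ioo 0 1) :
    0 < log ((V * η ^ 2 + 1) / δ ^ 2) := by
  obtain ⟨hδ0, hδ1⟩ := hδ
  apply log_pos
  rw [lt_div_iff₀ (by positivity)]
  nlinarith [mul_nonneg hV (sq_nonneg η)]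

lemma mixtureBoundary_pos (hη : η ≠ 0) {V : ℝ} (hV : 0 ≤ V) (hδ : δ ∈ Set.Ioo 0 1) :
    0 < mixtureBoundary η V δ :=
  sqrt_pos.2 (mul_pos (by positivity) (log_mixture_pos hV hδ))

lemma mixtureBoundary_div_mixtureBoundary (hη : η ≠ 0) (U : ℝ) {W : ℝ} (hW : 0 ≤ W)
    (hδ' : δ' ∈ Set.Ioo 0 1) :
    mixtureBoundary η U δ / mixtureBoundary η W δ' =
      √((U * η ^ 2 + 1) / (W * η ^ 2 + 1) *
        (log ((U * η ^ 2 + 1) / δ ^ 2) / log ((W * η ^ 2 + 1) / δ' ^ 2))) := by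
  have hlog := log_mixture_pos (η := η) hW hδ'
  rw [mixtureBoundary, mixtureBoundary, ← sqrt_div' _ (by positivity)]
  congr 1
  field_simp

lemma mixtureBoundary_le_sqrt_mul (hη : η ≠ 0) {U W : ℝ} (hU : 0 ≤ U) (hUW : U ≤ W)
    (hδ : δ ≠ 0) :
    mixtureBoundary η U δ ≤ √((U * η ^ 2 + 1) / (W * η ^ 2 + 1)) * mixtureBoundary η W δ := by
  have hW : 0 < W * η ^ 2 + 1 := by have := hU.trans hUW; positivity
  have hlog : log ((U * η ^ 2 + 1) / δ ^ 2) ≤ log ((W * η ^ 2 + 1) / δ ^ 2) :=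
    log_le_log (by positivity) (by gcongr)
  rw [mixtureBoundary, mixtureBoundary, ← sqrt_mul (by positivity)]
  apply sqrt_le_sqrt
  calc (U * η ^ 2 + 1) / η ^ 2 * log ((U * η ^ 2 + 1) / δ ^ 2)
      ≤ (U * η ^ 2 + 1) / η ^ 2 * log ((W * η ^ 2 + 1) / δ ^ 2) := by gcongr
    _ = _ := by rw [← mul_assoc, div_mul_div_cancel₀ hW.ne']

variable {ι : Type*} {l : Filter ι} {U W : ι → ℝ}

lemma tendsto_mixtureBoundary_div_of_ne_zero (hη : η ≠ 0) (hδ : δ ≠ 0)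
    (hδ' : δ' ∈ Set.Ioo 0 1) (hW : Tendsto W l atTop) {r : ℝ}
    (hUW : Tendsto (fun n => U n / W n) l (𝓝 r)) (hr : r ≠ 0) :
    Tendsto (fun n => mixtureBoundary η (U n) δ / mixtureBoundary η (W n) δ') l (𝓝 √r) := by
  have hc : 0 < η ^ 2 := by positivity
  have hWc : Tendsto (fun n => W n * η ^ 2) l atTop := hW.atTop_mul_const hc
  have hfactor : Tendsto (fun n => (U n * η ^ 2 + 1) / (W n * η ^ 2 + 1)) l (𝓝 r) := by
    refine tendsto_add_div_add_of_tendsto_div hWc (hUW.congr fun n => ?_) 1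
    rw [mul_div_mul_right _ _ hc.ne']
  have hlogs : Tendsto (fun n => log ((U n * η ^ 2 + 1) / δ ^ 2) /
      log ((W n * η ^ 2 + 1) / δ' ^ 2)) l (𝓝 1) := by
    refine tendsto_log_div_log_of_tendsto_div (L := r * (δ' ^ 2 / δ ^ 2))
      ((tendsto_atTop_add_const_right _ 1 hWc).atTop_div_const (by nlinarith [hδ'.1]))
      ((hfactor.mul_const _).congr fun n => by
        rw [div_div_div_eq, mul_comm (δ ^ 2), mul_div_mul_comm]) ?_
    exact mul_ne_zero hr (div_ne_zero (pow_ne_zero 2 hδ'.1.ne') (pow_ne_zero 2 hδ))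
  have hlim := (hfactor.mul hlogs).sqrt
  rw [mul_one] at hlim
  refine hlim.congr' ?_
  filter_upwards [hW.eventually_ge_atTop 0] with n hn
  rw [mixtureBoundary_div_mixtureBoundary hη _ hn hδ']

lemma tendsto_mixtureBoundary_div_of_zero (hη : η ≠ 0) (hδ : δ ≠ 0)
    (hδ' : δ' ∈ Set.Ioo 0 1) (hU : ∀ᶠ n in l, 0 ≤ U n) (hW : Tendsto W l atTop)
    (hUW : Tendsto (fun n => U n / W n) l (𝓝 0)) :
    Tendsto (fun n => mixtureBoundary η (U n) δ / mixtureBoundary η (W n) δ') l (𝓝 0) := by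
  have hc : 0 < η ^ 2 := by positivity
  have hfactor : Tendsto (fun n => √((U n * η ^ 2 + 1) / (W n * η ^ 2 + 1))) l (𝓝 0) := by
    rw [← sqrt_zero]
    refine (tendsto_add_div_add_of_tendsto_div (hW.atTop_mul_const hc)
      (hUW.congr fun n => ?_) 1).sqrt
    rw [mul_div_mul_right _ _ hc.ne']
  have hWW : Tendsto (fun n => W n / W n) l (𝓝 1) :=
    tendsto_const_nhds.congr' <| (hW.eventually_gt_atTop 0).mono fun n hn => (div_self hn.ne').symm
  have hsame := tendsto_mixtureBoundary_div_of_ne_zero hη hδ hδ' hW hWW one_ne_zero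
  rw [sqrt_one] at hsame
  refine tendsto_of_tendsto_of_tendsto_of_le_of_le' tendsto_const_nhds
    (by simpa using hfactor.mul hsame) (Eventually.of_forall fun n => by
      unfold mixtureBoundary; positivity) ?_
  filter_upwards [hU, hUW.eventually (gt_mem_nhds one_pos), hW.eventually_gt_atTop 0]
    with n hU0 hUW1 hW0
  rw [mul_div_assoc']
  gcongr
  · exact (mixtureBoundary_pos hη hW0.le hδ').le
  · exact mixtureBoundary_le_sqrt_mul hη hU0 ((div_lt_one hW0).1 hUW1).le hδ

end MixtureBoundary

/-- Relative width of the union bound vs. the variance upper bound,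
asymmetric case. With `b(V; δ) = √(((V·η²+1)/η²)·log((V·η²+1)/δ²))` and
`R_p(V₀, V₁) = (b(V₀; α/2) + b(V₁; α/2)) / b(V₁/(1−p) + V₀/p; α)`,
if `V₁ n → ∞` and `V₀ n / V₁ n → 0`, then `R_p(V₀ n, V₁ n) → √(1−p)`; in
particular the union-bound width is eventually strictly smaller than the
variance-upper-bound width. -/
theorem relative_width_asymmetric
    (η α p : ℝ) (hη : 0 < η) (hα : α ∈ Set.Ioo (0 : ℝ) 1)
    (hp : p ∈ Set.Ioo (0 : ℝ) 1)
    (b : ℝ → ℝ → ℝ)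
    (hb : ∀ V δ, b V δ = Real.sqrt (((V * η ^ 2 + 1) / η ^ 2)
        * Real.log ((V * η ^ 2 + 1) / δ ^ 2)))
    (V₀ V₁ : ℕ → ℝ) (hV₀ : ∀ n, 0 < V₀ n) (hV₁ : ∀ n, 0 < V₁ n)
    (hV₁top : Tendsto V₁ atTop atTop)
    (hratio : Tendsto (fun n => V₀ n / V₁ n) atTop (nhds 0)) :
    Tendsto (fun n => (b (V₀ n) (α / 2) + b (V₁ n) (α / 2))
        / b (V₁ n / (1 - p) + V₀ n / p) α)
      atTop (nhds (Real.sqrt (1 - p))) ∧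
    ∀ᶠ n in atTop,
      b (V₀ n) (α / 2) + b (V₁ n) (α / 2)
        < b (V₁ n / (1 - p) + V₀ n / p) α := by
  obtain rfl : b = mixtureBoundary η := funext₂ hb
  obtain ⟨hp0, hp1⟩ := hp
  have hα2 : α / 2 ≠ 0 := (half_pos hα.1).ne'
  set W := fun n => V₁ n / (1 - p) + V₀ n / p
  have hWpos (n : ℕ) : 0 < W n :=
    add_pos (div_pos (hV₁ n) (sub_pos.2 hp1)) (div_pos (hV₀ n) hp0)
  have hW : Tendsto W atTop atTop :=
    tendsto_atTop_mono (fun n => le_add_of_nonneg_right (div_pos (hV₀ n) hp0).le)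
      (hV₁top.atTop_div_const (by linarith))
  obtain ⟨hV₁W, hV₀W⟩ := tendsto_div_add_div_of_tendsto_div (s := 1 - p) (t := p)
    (Eventually.of_forall fun n => (hV₁ n).ne') (by linarith) hratio
  have hlim := (tendsto_mixtureBoundary_div_of_zero hη.ne' hα2 hα
    (Eventually.of_forall fun n => (hV₀ n).le) hW hV₀W).add
    (tendsto_mixtureBoundary_div_of_ne_zero hη.ne' hα2 hα hW hV₁W (by linarith))
  simp only [zero_add, ← add_div] at hlim
  refine ⟨hlim, ?_⟩
  filter_upwards [hlim.eventually (gt_mem_nhds ((sqrt_lt' one_pos).2 (by linarith)))] with n hn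
  exact (div_lt_one (mixtureBoundary_pos hη.ne' (hWpos n).le hα)).1 hn
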